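/- For any prime p with p ≡ 1 (mod 6) and integers x, y, the quantity (x+y)^p - x^p - y^p is divisible by p·x·y·(x+y)·(x^2+xy+y^2)^2. -/

import Mathlib

/-!
Put `f = (X + 1) ^ p - X ^ p - 1 ∈ ℤ[X]`. It vanishes at `0` and at `-1` (as `p` is odd), and it
is divisible by `(X ^ 2 + X + 1) ^ 2`: modulo that square both `X ^ 6` and `(X + 1) ^ 6` are `1`
plus a square-zero element. The three factors are pairwise coprime, so the monic polynomial
`g = X (X + 1) (X ^ 2 + X + 1) ^ 2` divides `f`, and since `f ≡ 0 mod p` (Frobenius) the cofactor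
is divisible by `p`: `f = p g h`. As `deg f ≤ p - 1`, `deg h ≤ p - 7`, and homogenizing `f = p g h`
in degree `p = 7 + (p - 7)` gives
`(x + y) ^ p - x ^ p - y ^ p = p x y (x + y) (x ^ 2 + x y + y ^ 2) ^ 2 H(x, y)`,
the factor `y` coming from `deg f < p`.
-/

open Polynomial

section CommRing

variable {R : Type*} [CommRing R]

theorem one_add_pow_of_sq_eq_zero {c : R} (hc : c ^ 2 = 0) (n : ℕ) :
    (1 + c) ^ n = 1 + n * c := by
  simpa [derivative_X_pow] using eval_add_of_sq_eq_zero (X ^ n) 1 c hc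

theorem add_one_pow_sub_pow_sub_one_eq_zero {t : R} (ht : (t ^ 2 + t + 1) ^ 2 = 0) {n : ℕ}
    (hn : n % 6 = 1) : (t + 1) ^ n - t ^ n - 1 = 0 := by
  obtain ⟨m, rfl⟩ : ∃ m, n = 6 * m + 1 := ⟨n / 6, by omega⟩
  set u := t ^ 2 + t + 1
  have hsq (a : R) : (a * u) ^ 2 = 0 := by rw [mul_pow, ht, mul_zero]
  -- `(t + 1) ^ 2 = t + u` and `t ^ 3 = 1 + (t - 1) * u`
  have h₁ : (t + 1) ^ 6 = 1 + (3 * t ^ 2 + t - 1) * u := by linear_combination (3 * t + u) * ht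
  have h₂ : t ^ 6 = 1 + 2 * (t - 1) * u := by linear_combination (t - 1) ^ 2 * ht
  rw [pow_succ, pow_succ, pow_mul, pow_mul, h₁, h₂, one_add_pow_of_sq_eq_zero (hsq _),
    one_add_pow_of_sq_eq_zero (hsq _)]
  linear_combination (m : R) * (3 * t - 1) * ht

theorem sq_X_sq_add_X_add_one_dvd {n : ℕ} (hn : n % 6 = 1) :
    ((X ^ 2 + X + 1) ^ 2 : R[X]) ∣ (X + 1) ^ n - X ^ n - 1 := by
  rw [← Ideal.mem_span_singleton, ← Ideal.Quotient.eq_zero_iff_mem]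
  have hX := Ideal.Quotient.mk_singleton_self ((X ^ 2 + X + 1) ^ 2 : R[X])
  rw [map_pow, map_add, map_add, map_pow, map_one] at hX
  simpa using add_one_pow_sub_pow_sub_one_eq_zero hX hn

theorem X_dvd_add_one_pow_sub_pow_sub_one {n : ℕ} (hn : n ≠ 0) :
    (X : R[X]) ∣ (X + 1) ^ n - X ^ n - 1 := by
  rw [X_dvd_iff, coeff_zero_eq_eval_zero]
  simp [hn]

theorem X_add_one_dvd_add_one_pow_sub_pow_sub_one {n : ℕ} (hn : Odd n) :
    (X + 1 : R[X]) ∣ (X + 1) ^ n - X ^ n - 1 := by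
  have h : (X - C (-1) : R[X]) ∣ (X + 1) ^ n - X ^ n - 1 := by
    rw [dvd_iff_isRoot]
    simp [hn.neg_one_pow, hn.pos.ne']
  simpa using h

theorem X_mul_X_add_one_mul_sq_dvd {n : ℕ} (hn : n % 6 = 1) :
    (X * (X + 1) * (X ^ 2 + X + 1) ^ 2 : R[X]) ∣ (X + 1) ^ n - X ^ n - 1 := by
  have hodd : Odd n := Nat.odd_iff.mpr (by omega)
  have h₁ : IsCoprime (X : R[X]) (X + 1) := ⟨-1, 1, by ring⟩
  have h₂ : IsCoprime (X * (X + 1) : R[X]) (X ^ 2 + X + 1) :=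
    IsCoprime.mul_left ⟨-(X + 1), 1, by ring⟩ ⟨-X, 1, by ring⟩
  exact h₂.pow_right.mul_dvd (h₁.mul_dvd (X_dvd_add_one_pow_sub_pow_sub_one hodd.pos.ne')
    (X_add_one_dvd_add_one_pow_sub_pow_sub_one hodd)) (sq_X_sq_add_X_add_one_dvd hn)

theorem natDegree_add_one_pow_sub_pow_sub_one_le (n : ℕ) :
    ((X + 1) ^ n - X ^ n - 1 : R[X]).natDegree ≤ n - 1 := by
  rw [natDegree_le_iff_coeff_eq_zero]
  intro N hN
  rcases (show N = n ∨ n < N by omega) with rfl | hlt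
  · simp [coeff_X_add_one_pow, coeff_one, show N ≠ 0 by omega]
  · simp [coeff_X_add_one_pow, coeff_X_pow, coeff_one, Nat.choose_eq_zero_of_lt hlt, hlt.ne',
      show N ≠ 0 by omega]

end CommRing

theorem C_dvd_iff_map_intCast_eq_zero (n : ℕ) (f : ℤ[X]) :
    C (n : ℤ) ∣ f ↔ f.map (Int.castRingHom (ZMod n)) = 0 := by
  rw [C_dvd_iff_dvd_coeff, Polynomial.ext_iff]
  simp [ZMod.intCast_zmod_eq_zero_iff_dvd]

theorem C_mul_dvd_of_monic_dvd {n : ℕ} [Nontrivial (ZMod n)] {f g : ℤ[X]} (hg : g.Monic)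
    (hgf : g ∣ f) (hf : f.map (Int.castRingHom (ZMod n)) = 0) : C (n : ℤ) * g ∣ f := by
  obtain ⟨q, rfl⟩ := hgf
  rw [Polynomial.map_mul, (hg.map _).mul_right_eq_zero_iff, ← C_dvd_iff_map_intCast_eq_zero] at hf
  rw [mul_comm]
  exact mul_dvd_mul_left g hf

theorem map_add_one_pow_sub_pow_sub_one_eq_zero (p : ℕ) [Fact p.Prime] :
    ((X + 1) ^ p - X ^ p - 1 : ℤ[X]).map (Int.castRingHom (ZMod p)) = 0 := by
  simp [add_pow_char]

theorem exists_add_one_pow_sub_pow_sub_one_eq_C_mul {p : ℕ} (hp : p.Prime) (hp1 : p % 6 = 1) :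
    ∃ h : ℤ[X], (X + 1) ^ p - X ^ p - 1 = C (p : ℤ) * (X * (X + 1) * (X ^ 2 + X + 1) ^ 2) * h ∧
      h.natDegree ≤ p - 7 := by
  have : Fact p.Prime := ⟨hp⟩
  have hg : (X * (X + 1) * (X ^ 2 + X + 1) ^ 2 : ℤ[X]).Monic := by monicity!
  have hg6 : (X * (X + 1) * (X ^ 2 + X + 1) ^ 2 : ℤ[X]).natDegree = 6 := by compute_degree!
  obtain ⟨h, hf⟩ := C_mul_dvd_of_monic_dvd hg (X_mul_X_add_one_mul_sq_dvd hp1)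
    (map_add_one_pow_sub_pow_sub_one_eq_zero p)
  refine ⟨h, hf, ?_⟩
  rcases eq_or_ne h 0 with rfl | h0
  · simp
  have hdeg := natDegree_add_one_pow_sub_pow_sub_one_le (R := ℤ) p
  rw [hf, mul_assoc, natDegree_C_mul (by exact_mod_cast hp.ne_zero), hg.natDegree_mul' h0,
    hg6] at hdeg
  omega

theorem eq_of_isHomogeneous_of_aeval_eq {R : Type*} [CommSemiring R]
    {q r : MvPolynomial (Fin 2) R} {n : ℕ} (hq : q.IsHomogeneous n) (hr : r.IsHomogeneous n)
    (h : MvPolynomial.aeval ![(X : R[X]), 1] q = MvPolynomial.aeval ![(X : R[X]), 1] r) :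
    q = r :=
  (homogenize_eq_of_isHomogeneous hq rfl).symm.trans (homogenize_eq_of_isHomogeneous hr h.symm)

open MvPolynomial in
theorem mul_dvd_add_pow_sub_pow_sub_pow {R : Type*} [CommRing R] {n : ℕ} {c : R} {h : R[X]}
    (hn : 7 ≤ n) (hdeg : h.natDegree ≤ n - 7)
    (hf : (.X + 1) ^ n - .X ^ n - 1 = .C c * (.X * (.X + 1) * (.X ^ 2 + .X + 1) ^ 2) * h)
    (x y : R) :
    c * x * y * (x + y) * (x ^ 2 + x * y + y ^ 2) ^ 2 ∣ (x + y) ^ n - x ^ n - y ^ n := by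
  have h₁ : (X 0 + X 1 : MvPolynomial (Fin 2) R).IsHomogeneous 1 :=
    (isHomogeneous_X R 0).add (isHomogeneous_X R 1)
  have h₂ : (X 0 ^ 2 + X 0 * X 1 + X 1 ^ 2 : MvPolynomial (Fin 2) R).IsHomogeneous 2 :=
    ((isHomogeneous_X_pow 0 2).add ((isHomogeneous_X R 0).mul (isHomogeneous_X R 1))).add
      (isHomogeneous_X_pow 1 2)
  have key : ((X 0 + X 1) ^ n - X 0 ^ n - X 1 ^ n : MvPolynomial (Fin 2) R) =
      MvPolynomial.C c * X 0 * X 1 * (X 0 + X 1) * (X 0 ^ 2 + X 0 * X 1 + X 1 ^ 2) ^ 2 *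
        h.homogenize (n - 7) := by
    apply eq_of_isHomogeneous_of_aeval_eq (n := n)
    · have h₃ := h₁.pow n
      rw [one_mul] at h₃
      exact (h₃.sub (isHomogeneous_X_pow 0 n)).sub (isHomogeneous_X_pow 1 n)
    · convert (((((isHomogeneous_X R 0).mul (isHomogeneous_X R 1)).mul h₁).mul
        (h₂.pow 2)).C_mul c).mul (isHomogeneous_homogenize (n := n - 7) h) using 1
      · ring
      · omega
    · simp [aeval_homogenize_X_one _ hdeg, hf]
      ring
  simpa using map_dvd (MvPolynomial.eval ![x, y]) ⟨_, key⟩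

theorem stmt_3 (p : ℕ) (hp : p.Prime) (hp1 : p % 6 = 1) (x y : ℤ) :
    (p : ℤ) * x * y * (x + y) * (x ^ 2 + x * y + y ^ 2) ^ 2 ∣
      (x + y) ^ p - x ^ p - y ^ p := by
  obtain ⟨h, hf, hdeg⟩ := exists_add_one_pow_sub_pow_sub_one_eq_C_mul hp hp1
  exact mul_dvd_add_pow_sub_pow_sub_pow (by have := hp.one_lt; omega) hdeg hf x y
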